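/- arXiv:2306.08694 — 2 statements merged into one kernel-verified Lean document; each statement's English description precedes it below -/
import Mathlib

section
/- (Remark after Proposition 5.1: d_Δ is a pseudo-distance.) Assume E ⊆ ℂ^d is open, every entry of Δ is holomorphic on E, and B_Δ is a nonempty connected open set. Then d_Δ is a pseudo-distance on B_Δ: for all z_1, z_2, z_3 ∈ B_Δ one has d_Δ(z_1, z_1) = 0, d_Δ(z_1, z_2) = d_Δ(z_2, z_1), and d_Δ(z_1, z_3) ≤ d_Δ(z_1, z_2) + d_Δ(z_2, z_3). -/
open scoped Matrix.Norms.L2Operator ComplexOrder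
open Matrix

noncomputable section

open scoped Classical in
/-- Square root of a positive semidefinite matrix (junk value `0` otherwise). -/
def msqrt {n' : Type*} [Fintype n'] [DecidableEq n'] (M : Matrix n' n' ℂ) : Matrix n' n' ℂ :=
  if h : M.PosSemidef then (h.1.eigenvectorUnitary : Matrix n' n' ℂ) *
    diagonal ((↑) ∘ Real.sqrt ∘ h.1.eigenvalues) * (star (h.1.eigenvectorUnitary : Matrix n' n' ℂ))
  else 0

/-- The pseudo-distance `d_Δ`. -/
def dDelta {α m' n' : Type*} [Fintype m'] [Fintype n'] [DecidableEq m'] [DecidableEq n']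
    (Δ : α → Matrix m' n' ℂ) (z w : α) : ℝ :=
  ‖(msqrt (1 - Δ w * (Δ w)ᴴ))⁻¹ * ((Δ z - Δ w) *
      ((1 - (Δ w)ᴴ * Δ z)⁻¹ * msqrt (1 - (Δ w)ᴴ * Δ w)))‖

/-- `B_Δ = {z ∈ E : ‖Δ(z)‖ < 1}`. -/
def BDelta {α m' n' : Type*} [Fintype m'] [Fintype n'] [DecidableEq n'] (E : Set α)
    (Δ : α → Matrix m' n' ℂ) : Set α :=
  {z | z ∈ E ∧ ‖Δ z‖ < 1}

/-- pseudo-hyperbolic distance on the unit disk -/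
def dDisk (a b : ℂ) : ℝ := ‖a - b‖ / ‖1 - (starRingEnd ℂ) b * a‖

/-- elementary tensor `ξ ⊗ v` in `ℂ^m ⊗ ℂ^2`, realized as a function on `m × Fin 2` -/
def tpr {m' : Type*} (ξ : m' → ℂ) (v : Fin 2 → ℂ) : m' × Fin 2 → ℂ :=
  fun p => ξ p.1 * v p.2

/-- inner product, conjugate-linear in the second variable -/
def herm {m' : Type*} [Fintype m'] (ξ η : m' → ℂ) : ℂ :=
  ∑ p, ξ p * (starRingEnd ℂ) (η p)

/-- positive semidefiniteness of a `2 × 2` kernel `(a i j)` -/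
def PSD2 (a : Fin 2 → Fin 2 → ℂ) : Prop :=
  ∀ c : Fin 2 → ℂ, 0 ≤ ∑ i, ∑ j, a i j * c i * (starRingEnd ℂ) (c j)

/-- `T` is a generic tuple with joint eigenvectors `v` and joint eigenvalues `z 0 ≠ z 1`. -/
def IsGenericTuple {d : ℕ} (T : Fin d → Matrix (Fin 2) (Fin 2) ℂ)
    (v : Fin 2 → Fin 2 → ℂ) (z : Fin 2 → Fin d → ℂ) : Prop :=
  LinearIndependent ℂ v ∧ z 0 ≠ z 1 ∧ ∀ i j, T i *ᵥ v j = z j i • v j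

/-- `‖Δ(T)‖ ≤ 1`, where `Δ(T)` is the matrix on `ℂ^s ⊗ ℂ^2` determined by
`Δ(T)(e_i ⊗ v_j) = (Δ(z_j) e_i) ⊗ v_j`. -/
def DeltaTContract {β : Type*} {s r : ℕ} (Δ : β → Matrix (Fin s) (Fin r) ℂ)
    (v : Fin 2 → Fin 2 → ℂ) (z : Fin 2 → β) : Prop :=
  ∀ DT : Matrix (Fin s × Fin 2) (Fin r × Fin 2) ℂ,
    (∀ (i : Fin r) (j : Fin 2),
      DT *ᵥ tpr (Pi.single i 1) (v j) = tpr (Δ (z j) *ᵥ Pi.single i 1) (v j)) →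
    ‖DT‖ ≤ 1

/-- membership in the class `S_{2,gen}(B_Δ)` -/
def MemS2gen {d s r : ℕ} (E : Set (Fin d → ℂ)) (Δ : (Fin d → ℂ) → Matrix (Fin s) (Fin r) ℂ)
    (f : (Fin d → ℂ) → ℂ) : Prop :=
  ∀ (T : Fin d → Matrix (Fin 2) (Fin 2) ℂ) (v : Fin 2 → Fin 2 → ℂ) (z : Fin 2 → Fin d → ℂ),
    IsGenericTuple T v z → (∀ j, z j ∈ BDelta E Δ) → DeltaTContract Δ v z →
    ∀ fT : Matrix (Fin 2) (Fin 2) ℂ, (∀ j, fT *ᵥ v j = f (z j) • v j) → ‖fT‖ ≤ 1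

/-- the Möbius pseudo-distance of a domain `Ω` -/
def dMobius {α : Type*} [NormedAddCommGroup α] [NormedSpace ℂ α] (Ω : Set α) (z w : α) : ℝ :=
  sSup {x | ∃ g : α → ℂ, DifferentiableOn ℂ g Ω ∧ (∀ ζ ∈ Ω, ‖g ζ‖ < 1) ∧ x = dDisk (g z) (g w)}

/-- `Ω` is a complete spectral domain for the diagonalizable tuple with eigenvectors `v` and
joint eigenvalues `z 0, z 1`. -/
def IsCompleteSpectralDomainFor {α : Type*} [NormedAddCommGroup α] [NormedSpace ℂ α]
    (Ω : Set α) (v : Fin 2 → Fin 2 → ℂ) (z : Fin 2 → α) : Prop :=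
  ∀ (n : ℕ) (F : α → Matrix (Fin n) (Fin n) ℂ),
    (∀ i j, DifferentiableOn ℂ (fun ζ => F ζ i j) Ω) →
    ∀ C : ℝ, (∀ ζ ∈ Ω, ‖F ζ‖ ≤ C) →
    ∀ FT : Matrix (Fin n × Fin 2) (Fin n × Fin 2) ℂ,
      (∀ (ξ : Fin n → ℂ) (j : Fin 2), FT *ᵥ tpr ξ (v j) = tpr (F (z j) *ᵥ ξ) (v j)) →
      ‖FT‖ ≤ C

/-!
With the matrix Möbius map `φ_B(A) = (1 - BBᴴ)^{-1/2} (A - B) (1 - BᴴA)⁻¹ (1 - BᴴB)^{1/2}` one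
has `d_Δ(z, w) = ‖φ_{Δ w}(Δ z)‖`, and everything follows from the Pick-matrix criterion
`‖φ_B(A)‖ ≤ t ↔ [[1 - AᴴA, c (1 - AᴴB)], [c (1 - BᴴA), 1 - BᴴB]] ⪰ 0` with `c = √(1 - t²)`.
The criterion comes from the identity `G_Aᴴ (1 - φ_B(A)ᴴ φ_B(C)) G_C = 1 - AᴴC`, where
`G_A = (1 - BᴴB)^{-1/2} (1 - BᴴA)` is invertible: conjugation by `diag(G_A, G_C)` carries the Pick
matrix of `φ_B A, φ_B C` to that of `A, C`, and for `C = B` (where `φ_B B = 0`) positivity is a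
Schur complement condition. The Pick matrix is symmetric in `A, B`, which gives the symmetry of
`d_Δ`. By Cauchy–Schwarz the Pick matrix of `X, Y` with `‖X‖ ≤ t`, `‖Y‖ ≤ u` is positive for
`c = √(1 - v²)`, `v = (t + u) / (1 + t u)`; applied to `X = φ_B A`, `Y = φ_B C` this yields the
strong triangle inequality `d_Δ(z₁, z₃) ≤ (t + u) / (1 + t u) ≤ t + u`.
-/

section EuclideanNorm

variable {n : Type*} [Fintype n]

/-- The Euclidean norm; `n → ℂ` itself carries the sup norm. -/
def euclNorm (v : n → ℂ) : ℝ := ‖WithLp.toLp 2 v‖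

lemma euclNorm_nonneg (v : n → ℂ) : 0 ≤ euclNorm v := norm_nonneg _

lemma star_dotProduct_self_eq (v : n → ℂ) : star v ⬝ᵥ v = ((euclNorm v ^ 2 : ℝ) : ℂ) := by
  rw [dotProduct_comm, ← EuclideanSpace.inner_toLp_toLp, inner_self_eq_norm_sq_to_K, euclNorm]
  norm_cast

lemma norm_star_dotProduct_le (v w : n → ℂ) : ‖star v ⬝ᵥ w‖ ≤ euclNorm v * euclNorm w := by
  rw [dotProduct_comm, ← EuclideanSpace.inner_toLp_toLp]
  exact norm_inner_le_norm _ _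

lemma star_dotProduct_conjTranspose_mul_mulVec {m : Type*} [Fintype m] (X Y : Matrix m n ℂ)
    (v w : n → ℂ) : star v ⬝ᵥ ((Xᴴ * Y) *ᵥ w) = star (X *ᵥ v) ⬝ᵥ (Y *ᵥ w) := by
  rw [← mulVec_mulVec, dotProduct_mulVec, star_mulVec]

end EuclideanNorm

section OperatorNorm

variable {m n : Type*} [Fintype m] [Fintype n] [DecidableEq n]

lemma euclNorm_mulVec_le (X : Matrix m n ℂ) (v : n → ℂ) :
    euclNorm (X *ᵥ v) ≤ ‖X‖ * euclNorm v :=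
  X.l2_opNorm_mulVec (WithLp.toLp 2 v)

lemma l2_opNorm_le_of_euclNorm_mulVec_le (X : Matrix m n ℂ) {t : ℝ} (ht : 0 ≤ t)
    (h : ∀ v, euclNorm (X *ᵥ v) ≤ t * euclNorm v) : ‖X‖ ≤ t := by
  rw [l2_opNorm_def]
  exact ContinuousLinearMap.opNorm_le_bound _ ht fun x => h x.ofLp

lemma posSemidef_sq_smul_one_sub_iff (X : Matrix m n ℂ) {t : ℝ} (ht : 0 ≤ t) :
    ((t : ℂ) ^ 2 • 1 - Xᴴ * X).PosSemidef ↔ ‖X‖ ≤ t := by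
  have quadForm (v : n → ℂ) : star v ⬝ᵥ (((t : ℂ) ^ 2 • 1 - Xᴴ * X) *ᵥ v)
      = (((t * euclNorm v) ^ 2 - euclNorm (X *ᵥ v) ^ 2 : ℝ) : ℂ) := by
    rw [sub_mulVec, dotProduct_sub, smul_mulVec, dotProduct_smul, one_mulVec,
      star_dotProduct_conjTranspose_mul_mulVec, star_dotProduct_self_eq, star_dotProduct_self_eq,
      smul_eq_mul]
    push_cast; ring
  have hHerm : ((t : ℂ) ^ 2 • 1 - Xᴴ * X).IsHermitian := by
    simp [IsHermitian, conjTranspose_sub, conjTranspose_smul, ← Complex.ofReal_pow]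
  refine ⟨fun h => l2_opNorm_le_of_euclNorm_mulVec_le X ht fun v => ?_, fun h => ?_⟩
  · have hv := h.dotProduct_mulVec_nonneg v
    rw [quadForm, Complex.zero_le_real, sub_nonneg] at hv
    exact (pow_le_pow_iff_left₀ (euclNorm_nonneg _) (mul_nonneg ht (euclNorm_nonneg _))
      two_ne_zero).mp hv
  · refine .of_dotProduct_mulVec_nonneg hHerm fun v => ?_
    rw [quadForm, Complex.zero_le_real, sub_nonneg]
    exact pow_le_pow_left₀ (euclNorm_nonneg _)
      ((euclNorm_mulVec_le X v).trans (by gcongr; exact euclNorm_nonneg v)) 2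

lemma posDef_one_sub_conjTranspose_mul_self {X : Matrix m n ℂ} (hX : ‖X‖ < 1) :
    (1 - Xᴴ * X).PosDef := by
  have hsplit : 1 - Xᴴ * X = ((1 - ‖X‖ ^ 2 : ℝ) : ℂ) • (1 : Matrix n n ℂ)
      + (((‖X‖ : ℂ) ^ 2 • 1 - Xᴴ * X)) := by
    push_cast; module
  rw [hsplit]
  refine .add_posSemidef (.smul .one ?_)
    ((posSemidef_sq_smul_one_sub_iff X (norm_nonneg X)).mpr le_rfl)
  exact Complex.zero_lt_real.mpr (by nlinarith [norm_nonneg X])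

lemma posDef_one_sub_mul_conjTranspose_self [DecidableEq m] {X : Matrix m n ℂ} (hX : ‖X‖ < 1) :
    (1 - X * Xᴴ).PosDef := by
  simpa using posDef_one_sub_conjTranspose_mul_self (X := Xᴴ) (by rwa [l2_opNorm_conjTranspose])

lemma isUnit_one_sub_conjTranspose_mul [DecidableEq m] {A B : Matrix m n ℂ} (hA : ‖A‖ < 1)
    (hB : ‖B‖ < 1) : IsUnit (1 - Bᴴ * A) := by
  refine isUnit_one_sub_of_norm_lt_one ((l2_opNorm_mul _ _).trans_lt ?_)
  rw [l2_opNorm_conjTranspose]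
  exact mul_lt_one_of_nonneg_of_lt_one_left (norm_nonneg _) hB hA.le

end OperatorNorm

section Msqrt

variable {n : Type*} [Fintype n] [DecidableEq n] {M : Matrix n n ℂ}

lemma msqrt_mul_self (h : M.PosSemidef) : msqrt M * msqrt M = M := by
  rw [msqrt, dif_pos h]
  set U : Matrix n n ℂ := (h.1.eigenvectorUnitary : Matrix n n ℂ)
  have hUU : star U * U = 1 := Unitary.coe_star_mul_self _
  set D : Matrix n n ℂ := diagonal ((↑) ∘ Real.sqrt ∘ h.1.eigenvalues)
  have hD : D * D = diagonal (RCLike.ofReal ∘ h.1.eigenvalues) := by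
    rw [diagonal_mul_diagonal]
    congr 1; funext i
    simp [← Complex.ofReal_mul, Real.mul_self_sqrt (h.eigenvalues_nonneg i)]
  conv_rhs => rw [h.1.spectral_theorem, Unitary.conjStarAlgAut_apply]
  simp only [Matrix.mul_assoc]
  rw [← Matrix.mul_assoc (star U) U, hUU, Matrix.one_mul, ← Matrix.mul_assoc _ _ (star U), hD]

lemma conjTranspose_msqrt (h : M.PosSemidef) : (msqrt M)ᴴ = msqrt M := by
  rw [msqrt, dif_pos h]
  simp [conjTranspose_mul, Matrix.mul_assoc, star_eq_conjTranspose, diagonal_conjTranspose]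
  congr 3; funext i; simp

lemma isUnit_msqrt (h : M.PosDef) : IsUnit (msqrt M) :=
  isUnit_of_mul_isUnit_left ((msqrt_mul_self h.posSemidef).symm ▸ h.isUnit)

lemma conjTranspose_inv_msqrt_mul_inv_msqrt_mul {m l : Type*} (h : M.PosSemidef)
    (X : Matrix n m ℂ) (Y : Matrix n l ℂ) :
    ((msqrt M)⁻¹ * X)ᴴ * ((msqrt M)⁻¹ * Y) = Xᴴ * M⁻¹ * Y := by
  rw [conjTranspose_mul, conjTranspose_nonsing_inv, conjTranspose_msqrt h, Matrix.mul_assoc,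
    ← Matrix.mul_assoc (msqrt M)⁻¹, ← Matrix.mul_inv_rev, msqrt_mul_self h, Matrix.mul_assoc]

end Msqrt

lemma inv_one_sub_mul_comm {m n R : Type*} [Fintype m] [Fintype n] [DecidableEq m]
    [DecidableEq n] [CommRing R] (X : Matrix m n R) (Y : Matrix n m R) (h : IsUnit (1 - Y * X)) :
    (1 - X * Y)⁻¹ = 1 + X * (1 - Y * X)⁻¹ * Y := by
  refine inv_eq_right_inv ?_
  have hpush : (1 - X * Y) * X = X * (1 - Y * X) := by
    simp only [Matrix.sub_mul, Matrix.mul_sub, Matrix.one_mul, Matrix.mul_one, Matrix.mul_assoc]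
  rw [Matrix.mul_add, Matrix.mul_one, ← Matrix.mul_assoc, ← Matrix.mul_assoc, hpush,
    Matrix.mul_assoc X, mul_nonsing_inv _ ((isUnit_iff_isUnit_det _).mp h), Matrix.mul_one,
    sub_add_cancel]

lemma one_sub_mul_eq_of_isUnit {m n R : Type*} [Fintype m] [Fintype n] [DecidableEq m]
    [DecidableEq n] [CommRing R] (X Y : Matrix n m R) (B C : Matrix m n R)
    (h : IsUnit (1 - Y * B)) :
    (1 - X * B) * (1 - Y * B)⁻¹ * (1 - Y * C) - (X - Y) * (1 - B * Y)⁻¹ * (C - B) = 1 - X * C := by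
  set Q := 1 - Y * B
  have hQ : Q * Q⁻¹ = 1 := mul_nonsing_inv _ ((isUnit_iff_isUnit_det _).mp h)
  have hQ' : Q⁻¹ * Q = 1 := nonsing_inv_mul _ ((isUnit_iff_isUnit_det _).mp h)
  have hX : 1 - X * B = Q - (X - Y) * B := by
    simp only [Q, Matrix.sub_mul]; abel
  have hC : 1 - Y * C = Q - Y * (C - B) := by
    simp only [Q, Matrix.mul_sub]; abel
  have hexpand (U V : Matrix n n R) :
      (Q - U) * Q⁻¹ * (Q - V) = Q - V - U + U * Q⁻¹ * V := by
    calc (Q - U) * Q⁻¹ * (Q - V) = Q * Q⁻¹ * Q - Q * Q⁻¹ * V - U * (Q⁻¹ * Q) + U * Q⁻¹ * V := by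
          noncomm_ring
      _ = Q - V - U + U * Q⁻¹ * V := by rw [hQ, hQ', Matrix.one_mul, Matrix.one_mul,
          Matrix.mul_one]
  rw [inv_one_sub_mul_comm B Y h, hX, hC, hexpand]
  simp only [Q, Matrix.mul_add, Matrix.add_mul, Matrix.mul_sub, Matrix.sub_mul, Matrix.mul_one,
    Matrix.mul_assoc]
  abel

section Mobius

variable {m n : Type*} [Fintype m] [Fintype n] [DecidableEq m] [DecidableEq n]
  {A B C : Matrix m n ℂ}

def mobius (B A : Matrix m n ℂ) : Matrix m n ℂ :=
  (msqrt (1 - B * Bᴴ))⁻¹ * ((A - B) * ((1 - Bᴴ * A)⁻¹ * msqrt (1 - Bᴴ * B)))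

def mobiusFactor (B A : Matrix m n ℂ) : Matrix n n ℂ :=
  (msqrt (1 - Bᴴ * B))⁻¹ * (1 - Bᴴ * A)

lemma dDelta_eq_norm_mobius {α : Type*} (Δ : α → Matrix m n ℂ) (z w : α) :
    dDelta Δ z w = ‖mobius (Δ w) (Δ z)‖ := rfl

@[simp]
lemma mobius_self (B : Matrix m n ℂ) : mobius B B = 0 := by
  simp [mobius]

lemma isUnit_mobiusFactor (hA : ‖A‖ < 1) (hB : ‖B‖ < 1) : IsUnit (mobiusFactor B A) :=
  (isUnit_nonsing_inv_iff.mpr (isUnit_msqrt (posDef_one_sub_conjTranspose_mul_self hB))).mul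
    (isUnit_one_sub_conjTranspose_mul hA hB)

lemma mobius_mul_mobiusFactor (hA : ‖A‖ < 1) (hB : ‖B‖ < 1) :
    mobius B A * mobiusFactor B A = (msqrt (1 - B * Bᴴ))⁻¹ * (A - B) := by
  have hS := (isUnit_iff_isUnit_det _).mp (isUnit_msqrt (posDef_one_sub_conjTranspose_mul_self hB))
  have hN := (isUnit_iff_isUnit_det _).mp (isUnit_one_sub_conjTranspose_mul hA hB)
  simp only [mobius, mobiusFactor, Matrix.mul_assoc]
  rw [mul_nonsing_inv_cancel_left _ _ hS, nonsing_inv_mul _ hN, Matrix.mul_one]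

lemma conjTranspose_mobiusFactor_mul_one_sub_mul (hA : ‖A‖ < 1) (hB : ‖B‖ < 1)
    (hC : ‖C‖ < 1) :
    (mobiusFactor B A)ᴴ * (1 - (mobius B A)ᴴ * mobius B C) * mobiusFactor B C = 1 - Aᴴ * C := by
  have hcross : (mobiusFactor B A)ᴴ * ((mobius B A)ᴴ * mobius B C) * mobiusFactor B C =
      (mobius B A * mobiusFactor B A)ᴴ * (mobius B C * mobiusFactor B C) := by
    simp only [conjTranspose_mul, Matrix.mul_assoc]
  rw [Matrix.mul_sub, Matrix.sub_mul, Matrix.mul_one, hcross, mobius_mul_mobiusFactor hA hB,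
    mobius_mul_mobiusFactor hC hB, mobiusFactor, mobiusFactor,
    conjTranspose_inv_msqrt_mul_inv_msqrt_mul (posDef_one_sub_conjTranspose_mul_self hB).posSemidef,
    conjTranspose_inv_msqrt_mul_inv_msqrt_mul
      (posDef_one_sub_mul_conjTranspose_self hB).posSemidef]
  simpa using one_sub_mul_eq_of_isUnit Aᴴ Bᴴ B C (isUnit_one_sub_conjTranspose_mul hB hB)

end Mobius

section Pick

variable {m n : Type*} [Fintype m] [DecidableEq n] {A B C : Matrix m n ℂ}

def pickMatrix (A B : Matrix m n ℂ) (c : ℝ) : Matrix (n ⊕ n) (n ⊕ n) ℂ :=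
  fromBlocks (1 - Aᴴ * A) ((c : ℂ) • (1 - Aᴴ * B)) ((c : ℂ) • (1 - Bᴴ * A)) (1 - Bᴴ * B)

lemma isHermitian_pickMatrix (A B : Matrix m n ℂ) (c : ℝ) : (pickMatrix A B c).IsHermitian := by
  simp [IsHermitian, pickMatrix, fromBlocks_conjTranspose, conjTranspose_smul,
    conjTranspose_sub, conjTranspose_mul]

lemma posSemidef_pickMatrix_comm {c : ℝ} :
    (pickMatrix A B c).PosSemidef ↔ (pickMatrix B A c).PosSemidef := by
  rw [← posSemidef_submatrix_equiv (Equiv.sumComm n n), Equiv.sumComm_apply, pickMatrix,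
    fromBlocks_submatrix_sum_swap_sum_swap, pickMatrix]

variable [Fintype n]

lemma posSemidef_pickMatrix_zero_iff (M : Matrix m n ℂ) {t : ℝ} (ht0 : 0 ≤ t) (ht1 : t ≤ 1) :
    (pickMatrix M 0 √(1 - t ^ 2)).PosSemidef ↔ ‖M‖ ≤ t := by
  set c : ℂ := ((√(1 - t ^ 2) : ℝ) : ℂ)
  have hblocks : pickMatrix M 0 √(1 - t ^ 2) = fromBlocks (1 - Mᴴ * M) (c • 1) (c • 1)ᴴ 1 := by
    simp [pickMatrix, conjTranspose_smul, c]
  have hschur : 1 - Mᴴ * M - c • 1 * 1⁻¹ * (c • 1)ᴴ = (t : ℂ) ^ 2 • 1 - Mᴴ * M := by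
    have hc2 : c * c = 1 - (t : ℂ) ^ 2 := by
      rw [← Complex.ofReal_mul, Real.mul_self_sqrt (by nlinarith)]; push_cast; rfl
    have hcstar : star c = c := Complex.conj_ofReal _
    rw [inv_one, Matrix.mul_one, conjTranspose_smul, conjTranspose_one, hcstar, smul_mul_smul,
      Matrix.one_mul, hc2]
    module
  let _ : Invertible (1 : Matrix n n ℂ) := invertibleOne
  rw [hblocks, PosDef.fromBlocks₂₂ _ _ (PosDef.one : (1 : Matrix n n ℂ).PosDef), hschur,
    posSemidef_sq_smul_one_sub_iff M ht0]

variable [DecidableEq m]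

lemma conjTranspose_fromBlocks_mobiusFactor_mul_pickMatrix (hA : ‖A‖ < 1) (hB : ‖B‖ < 1)
    (hC : ‖C‖ < 1) (c : ℝ) :
    (fromBlocks (mobiusFactor B A) 0 0 (mobiusFactor B C))ᴴ *
      pickMatrix (mobius B A) (mobius B C) c *
      fromBlocks (mobiusFactor B A) 0 0 (mobiusFactor B C) = pickMatrix A C c := by
  simp only [pickMatrix, fromBlocks_conjTranspose, conjTranspose_zero, fromBlocks_multiply,
    Matrix.zero_mul, Matrix.mul_zero, smul_zero, add_zero, zero_add, Matrix.smul_mul,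
    Matrix.mul_smul]
  simp only [conjTranspose_mobiusFactor_mul_one_sub_mul, hA, hB, hC]

lemma posSemidef_pickMatrix_mobius_iff (hA : ‖A‖ < 1) (hB : ‖B‖ < 1) (hC : ‖C‖ < 1) (c : ℝ) :
    (pickMatrix (mobius B A) (mobius B C) c).PosSemidef ↔ (pickMatrix A C c).PosSemidef := by
  have hU : IsUnit (fromBlocks (mobiusFactor B A) 0 0 (mobiusFactor B C)) := by
    rw [isUnit_iff_isUnit_det, det_fromBlocks_zero₂₁, IsUnit.mul_iff, ← isUnit_iff_isUnit_det,
      ← isUnit_iff_isUnit_det]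
    exact ⟨isUnit_mobiusFactor hA hB, isUnit_mobiusFactor hC hB⟩
  rw [← conjTranspose_fromBlocks_mobiusFactor_mul_pickMatrix hA hB hC, ← star_eq_conjTranspose,
    hU.posSemidef_star_left_conjugate_iff]

end Pick

section PickPositivity

variable {m n : Type*} [Fintype m] [Fintype n] [DecidableEq n]

lemma star_dotProduct_pickMatrix_mulVec (X Y : Matrix m n ℂ) (c : ℝ) (ξ η : n → ℂ) :
    star (Sum.elim ξ η) ⬝ᵥ (pickMatrix X Y c *ᵥ Sum.elim ξ η) =
      (((euclNorm ξ ^ 2 - euclNorm (X *ᵥ ξ) ^ 2) + (euclNorm η ^ 2 - euclNorm (Y *ᵥ η) ^ 2) +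
        2 * c * (star ξ ⬝ᵥ η - star (X *ᵥ ξ) ⬝ᵥ (Y *ᵥ η)).re : ℝ) : ℂ) := by
  have hstar : star (Sum.elim ξ η) = Sum.elim (star ξ) (star η) := by
    funext i; cases i <;> rfl
  have hform (U V : Matrix m n ℂ) (v w : n → ℂ) :
      star v ⬝ᵥ ((1 - Uᴴ * V) *ᵥ w) = star v ⬝ᵥ w - star (U *ᵥ v) ⬝ᵥ (V *ᵥ w) := by
    rw [sub_mulVec, dotProduct_sub, one_mulVec, star_dotProduct_conjTranspose_mul_mulVec]
  have hconj : star η ⬝ᵥ ξ - star (Y *ᵥ η) ⬝ᵥ (X *ᵥ ξ) =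
      starRingEnd ℂ (star ξ ⬝ᵥ η - star (X *ᵥ ξ) ⬝ᵥ (Y *ᵥ η)) := by
    rw [map_sub, starRingEnd_apply, starRingEnd_apply, star_dotProduct η,
      star_dotProduct (Y *ᵥ η)]
  rw [hstar, pickMatrix, fromBlocks_mulVec, sumElim_dotProduct_sumElim, Sum.elim_comp_inl,
    Sum.elim_comp_inr, dotProduct_add, dotProduct_add, smul_mulVec, smul_mulVec, dotProduct_smul,
    dotProduct_smul, hform, hform, hform, hform, hconj, star_dotProduct_self_eq,
    star_dotProduct_self_eq, star_dotProduct_self_eq, star_dotProduct_self_eq, smul_eq_mul,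
    smul_eq_mul]
  set z := star ξ ⬝ᵥ η - star (X *ᵥ ξ) ⬝ᵥ (Y *ᵥ η)
  have hre : z + starRingEnd ℂ z = 2 * (z.re : ℂ) := by
    rw [Complex.add_conj]; push_cast; rfl
  push_cast
  linear_combination (c : ℂ) * hre

lemma posSemidef_pickMatrix [DecidableEq m] {X Y : Matrix m n ℂ} {t u c : ℝ} (hX : ‖X‖ ≤ t)
    (hY : ‖Y‖ ≤ u) (ht : t ≤ 1) (hu : u ≤ 1) (hc : 0 ≤ c)
    (hcle : c * (1 + t * u) ≤ √(1 - t ^ 2) * √(1 - u ^ 2)) : (pickMatrix X Y c).PosSemidef := by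
  refine .of_dotProduct_mulVec_nonneg (isHermitian_pickMatrix X Y c) fun x => ?_
  rw [← Sum.elim_comp_inl_inr x, star_dotProduct_pickMatrix_mulVec, Complex.zero_le_real]
  set ξ := x ∘ Sum.inl
  set η := x ∘ Sum.inr
  have ht0 : 0 ≤ t := (norm_nonneg X).trans hX
  have hu0 : 0 ≤ u := (norm_nonneg Y).trans hY
  have ha := euclNorm_nonneg ξ
  have hb := euclNorm_nonneg η
  have hXξ : euclNorm (X *ᵥ ξ) ≤ t * euclNorm ξ := (euclNorm_mulVec_le X ξ).trans (by gcongr)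
  have hYη : euclNorm (Y *ᵥ η) ≤ u * euclNorm η := (euclNorm_mulVec_le Y η).trans (by gcongr)
  have hcross : -((1 + t * u) * (euclNorm ξ * euclNorm η)) ≤
      (star ξ ⬝ᵥ η - star (X *ᵥ ξ) ⬝ᵥ (Y *ᵥ η)).re := by
    refine neg_le_of_abs_le ((Complex.abs_re_le_norm _).trans ((norm_sub_le _ _).trans ?_))
    have hprod : euclNorm (X *ᵥ ξ) * euclNorm (Y *ᵥ η) ≤ (t * euclNorm ξ) * (u * euclNorm η) :=
      mul_le_mul hXξ hYη (euclNorm_nonneg _) (by positivity)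
    linarith [norm_star_dotProduct_le ξ η, norm_star_dotProduct_le (X *ᵥ ξ) (Y *ᵥ η)]
  have hst : √(1 - t ^ 2) ^ 2 = 1 - t ^ 2 := Real.sq_sqrt (by nlinarith)
  have hsu : √(1 - u ^ 2) ^ 2 = 1 - u ^ 2 := Real.sq_sqrt (by nlinarith)
  nlinarith [mul_le_mul_of_nonneg_left hcross hc, mul_le_mul_of_nonneg_right hcle
    (mul_nonneg ha hb), pow_le_pow_left₀ (euclNorm_nonneg _) hXξ 2,
    pow_le_pow_left₀ (euclNorm_nonneg _) hYη 2,
    sq_nonneg (√(1 - t ^ 2) * euclNorm ξ - √(1 - u ^ 2) * euclNorm η)]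

end PickPositivity

section EinsteinAddition

variable {t u : ℝ}

lemma add_div_one_add_mul_lt_one (ht0 : 0 ≤ t) (hu0 : 0 ≤ u) (ht : t < 1) (hu : u < 1) :
    (t + u) / (1 + t * u) < 1 := by
  rw [div_lt_one (by positivity)]
  nlinarith [mul_pos (sub_pos.mpr ht) (sub_pos.mpr hu)]

lemma sqrt_one_sub_sq_add_div_one_add_mul (ht0 : 0 ≤ t) (hu0 : 0 ≤ u) (ht : t ≤ 1) :
    √(1 - ((t + u) / (1 + t * u)) ^ 2) * (1 + t * u) = √(1 - t ^ 2) * √(1 - u ^ 2) := by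
  have hpos : 0 < 1 + t * u := by positivity
  calc √(1 - ((t + u) / (1 + t * u)) ^ 2) * (1 + t * u)
      = √((1 - ((t + u) / (1 + t * u)) ^ 2) * (1 + t * u) ^ 2) := by
        rw [Real.sqrt_mul' _ (sq_nonneg _), Real.sqrt_sq hpos.le]
    _ = √((1 - t ^ 2) * (1 - u ^ 2)) := by
        congr 1
        field_simp
        ring
    _ = √(1 - t ^ 2) * √(1 - u ^ 2) := Real.sqrt_mul (by nlinarith) _

end EinsteinAddition

section MobiusNorm

variable {m n : Type*} [Fintype m] [Fintype n] [DecidableEq m] [DecidableEq n]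
  {A B C : Matrix m n ℂ}

lemma norm_mobius_le_iff (hA : ‖A‖ < 1) (hB : ‖B‖ < 1) {t : ℝ} (ht0 : 0 ≤ t) (ht1 : t ≤ 1) :
    ‖mobius B A‖ ≤ t ↔ (pickMatrix A B √(1 - t ^ 2)).PosSemidef := by
  rw [← posSemidef_pickMatrix_zero_iff _ ht0 ht1, ← mobius_self B,
    posSemidef_pickMatrix_mobius_iff hA hB hB]

lemma posSemidef_pickMatrix_of_norm_le {X Y : Matrix m n ℂ} {t u : ℝ} (hX : ‖X‖ ≤ t)
    (hY : ‖Y‖ ≤ u) (ht : t ≤ 1) (hu : u ≤ 1) :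
    (pickMatrix X Y √(1 - ((t + u) / (1 + t * u)) ^ 2)).PosSemidef :=
  posSemidef_pickMatrix hX hY ht hu (Real.sqrt_nonneg _)
    (sqrt_one_sub_sq_add_div_one_add_mul ((norm_nonneg X).trans hX) ((norm_nonneg Y).trans hY)
      ht).le

lemma norm_mobius_lt_one (hA : ‖A‖ < 1) (hB : ‖B‖ < 1) : ‖mobius B A‖ < 1 := by
  have hlt := add_div_one_add_mul_lt_one (norm_nonneg A) (norm_nonneg B) hA hB
  refine lt_of_le_of_lt ((norm_mobius_le_iff hA hB (by positivity) hlt.le).mpr ?_) hlt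
  exact posSemidef_pickMatrix_of_norm_le le_rfl le_rfl hA.le hB.le

lemma norm_mobius_comm (hA : ‖A‖ < 1) (hB : ‖B‖ < 1) : ‖mobius B A‖ = ‖mobius A B‖ := by
  have hle {A B : Matrix m n ℂ} (hA : ‖A‖ < 1) (hB : ‖B‖ < 1) :
      ‖mobius A B‖ ≤ ‖mobius B A‖ := by
    have h1 := (norm_mobius_lt_one hA hB).le
    rw [norm_mobius_le_iff hB hA (norm_nonneg _) h1, posSemidef_pickMatrix_comm,
      ← norm_mobius_le_iff hA hB (norm_nonneg _) h1]
  exact le_antisymm (hle hB hA) (hle hA hB)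

lemma norm_mobius_le_add_div (hA : ‖A‖ < 1) (hB : ‖B‖ < 1) (hC : ‖C‖ < 1) :
    ‖mobius C A‖ ≤ (‖mobius B A‖ + ‖mobius C B‖) / (1 + ‖mobius B A‖ * ‖mobius C B‖) := by
  have hBA := norm_mobius_lt_one hA hB
  have hCB := norm_mobius_lt_one hB hC
  rw [norm_mobius_le_iff hA hC (by positivity)
    (add_div_one_add_mul_lt_one (norm_nonneg _) (norm_nonneg _) hBA hCB).le,
    ← posSemidef_pickMatrix_mobius_iff hA hB hC]
  exact posSemidef_pickMatrix_of_norm_le le_rfl (norm_mobius_comm hC hB).le hBA.le hCB.le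

end MobiusNorm

theorem dDelta_pseudoDist_general {d s r : ℕ} (E : Set (Fin d → ℂ))
    (Δ : (Fin d → ℂ) → Matrix (Fin s) (Fin r) ℂ)
    (z₁ z₂ z₃ : Fin d → ℂ)
    (h₁ : z₁ ∈ BDelta E Δ) (h₂ : z₂ ∈ BDelta E Δ) (h₃ : z₃ ∈ BDelta E Δ) :
    dDelta Δ z₁ z₁ = 0 ∧ dDelta Δ z₁ z₂ = dDelta Δ z₂ z₁ ∧
      dDelta Δ z₁ z₃ ≤ dDelta Δ z₁ z₂ + dDelta Δ z₂ z₃ := by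
  obtain ⟨-, h₁⟩ := h₁
  obtain ⟨-, h₂⟩ := h₂
  obtain ⟨-, h₃⟩ := h₃
  simp only [dDelta_eq_norm_mobius]
  refine ⟨by simp, norm_mobius_comm h₁ h₂, (norm_mobius_le_add_div h₁ h₂ h₃).trans ?_⟩
  exact div_le_self (by positivity) (le_add_of_nonneg_right (by positivity))

/-- `d_Δ` is a pseudo-distance on `B_Δ` (remark after Proposition 5.1). -/
theorem dDelta_pseudoDist {d s r : ℕ} (E : Set (Fin d → ℂ)) (hEopen : IsOpen E)
    (Δ : (Fin d → ℂ) → Matrix (Fin s) (Fin r) ℂ)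
    (hΔ : ∀ p q, DifferentiableOn ℂ (fun ζ => Δ ζ p q) E)
    (hconn : IsConnected (BDelta E Δ)) (hopen : IsOpen (BDelta E Δ))
    (z₁ z₂ z₃ : Fin d → ℂ)
    (h₁ : z₁ ∈ BDelta E Δ) (h₂ : z₂ ∈ BDelta E Δ) (h₃ : z₃ ∈ BDelta E Δ) :
    dDelta Δ z₁ z₁ = 0 ∧ dDelta Δ z₁ z₂ = dDelta Δ z₂ z₁ ∧
      dDelta Δ z₁ z₃ ≤ dDelta Δ z₁ z₂ + dDelta Δ z₂ z₃ :=
  dDelta_pseudoDist_general E Δ z₁ z₂ z₃ h₁ h₂ h₃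
end
end

section
/- (Remark 3.2(1): the conjugation function lies in S_{2,gen}(𝔻).) Let T be a 2×2 complex matrix with ‖T‖ ≤ 1 that is diagonalizable with two distinct eigenvalues z, w ∈ 𝔻 and corresponding eigenvectors v_1, v_2 forming a basis of ℂ^2. Then the 2×2 matrix S determined by S v_1 = conj(z) v_1 and S v_2 = conj(w) v_2 satisfies ‖S‖ ≤ 1. (Hence the non-holomorphic function z ↦ conj(z) belongs to S_{2,gen}(𝔻), so S_2(𝔻) ≠ S_{2,gen}(𝔻).) -/
open scoped Matrix.Norms.L2Operator ComplexOrder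
open Matrix

noncomputable section

open ComplexConjugate
open scoped InnerProductSpace

/-! If `x, y` are eigenvectors of `T` for `z, w`, then `‖T‖ ≤ 1` says that the Hermitian form
`‖a • x + b • y‖² - ‖(a * z) • x + (b * w) • y‖²` in `(a, b)` is nonnegative. Passing to
`conj z, conj w` leaves its diagonal coefficients `(1 - |z|²) ‖x‖²`, `(1 - |w|²) ‖y‖²` unchanged
and replaces the factor `1 - conj z * w` of its off-diagonal coefficient by its complex
conjugate, so substituting `μ * b` for `b` with a suitable `|μ| = 1` turns one form into the
other. -/

theorem Complex.exists_norm_eq_one_mul_eq_conj (c : ℂ) : ∃ μ : ℂ, ‖μ‖ = 1 ∧ μ * c = conj c := by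
  rcases eq_or_ne c 0 with rfl | hc
  · exact ⟨1, by simp⟩
  · refine ⟨conj c / c, ?_, div_mul_cancel₀ _ hc⟩
    rw [norm_div, Complex.norm_conj, div_self (norm_ne_zero_iff.mpr hc)]

section

variable {E : Type*} [NormedAddCommGroup E] [InnerProductSpace ℂ E]

theorem norm_smul_add_smul_sq (a b : ℂ) (x y : E) :
    ‖a • x + b • y‖ ^ 2 =
      ‖a‖ ^ 2 * ‖x‖ ^ 2 + ‖b‖ ^ 2 * ‖y‖ ^ 2 + 2 * (conj a * b * ⟪x, y⟫_ℂ).re := by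
  rw [norm_add_sq (𝕜 := ℂ), inner_smul_left, inner_smul_right, norm_smul, norm_smul, mul_pow,
    mul_pow, mul_assoc, RCLike.re_to_complex]
  ring

theorem norm_conj_smul_add_smul_le {x y : E} {z w : ℂ}
    (h : ∀ a b : ℂ, ‖(a * z) • x + (b * w) • y‖ ≤ ‖a • x + b • y‖) (a b : ℂ) :
    ‖(a * conj z) • x + (b * conj w) • y‖ ≤ ‖a • x + b • y‖ := by
  obtain ⟨μ, hμ, hμc⟩ := Complex.exists_norm_eq_one_mul_eq_conj (1 - conj z * w)
  have hrot := h a (μ * b)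
  rw [← pow_le_pow_iff_left₀ (norm_nonneg _) (norm_nonneg _) two_ne_zero] at hrot ⊢
  simp only [norm_smul_add_smul_sq, norm_mul, Complex.norm_conj, hμ, one_mul] at hrot ⊢
  have hcross : conj a * b * ⟪x, y⟫_ℂ - conj (a * conj z) * (b * conj w) * ⟪x, y⟫_ℂ =
      conj a * (μ * b) * ⟪x, y⟫_ℂ - conj (a * z) * (μ * b * w) * ⟪x, y⟫_ℂ := by
    simp only [map_mul, map_sub, map_one, Complex.conj_conj] at hμc ⊢
    linear_combination (-(conj a * b * ⟪x, y⟫_ℂ)) * hμc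
  have hcross_re := congrArg Complex.re hcross
  simp only [Complex.sub_re] at hcross_re
  linarith

theorem ContinuousLinearMap.norm_le_one_of_conj_eigenvalues {f g : E →L[ℂ] E} {x y : E}
    {z w : ℂ} (hf : ‖f‖ ≤ 1) (hspan : Submodule.span ℂ {x, y} = ⊤) (hfx : f x = z • x)
    (hfy : f y = w • y) (hgx : g x = conj z • x) (hgy : g y = conj w • y) : ‖g‖ ≤ 1 := by
  have hf' (a b : ℂ) : ‖(a * z) • x + (b * w) • y‖ ≤ ‖a • x + b • y‖ := by
    simpa only [map_add, map_smul, hfx, hfy, smul_smul, one_mul]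
      using f.le_of_opNorm_le hf (a • x + b • y)
  refine g.opNorm_le_bound zero_le_one fun e => ?_
  obtain ⟨a, b, rfl⟩ := Submodule.mem_span_pair.mp (hspan ▸ Submodule.mem_top : e ∈ _)
  simpa only [map_add, map_smul, hgx, hgy, smul_smul, one_mul]
    using norm_conj_smul_add_smul_le hf' a b

end

theorem conj_mem_S2gen_disk_general (T S : Matrix (Fin 2) (Fin 2) ℂ) (v : Fin 2 → Fin 2 → ℂ)
    (z w : ℂ) (hT : ‖T‖ ≤ 1) (hv : LinearIndependent ℂ v)
    (h₀ : T *ᵥ v 0 = z • v 0) (h₁ : T *ᵥ v 1 = w • v 1)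
    (hS₀ : S *ᵥ v 0 = (starRingEnd ℂ) z • v 0)
    (hS₁ : S *ᵥ v 1 = (starRingEnd ℂ) w • v 1) :
    ‖S‖ ≤ 1 := by
  set u : Fin 2 → EuclideanSpace ℂ (Fin 2) := fun j => WithLp.toLp 2 (v j)
  have hu : LinearIndependent ℂ u :=
    hv.map' (WithLp.linearEquiv 2 ℂ (Fin 2 → ℂ)).symm.toLinearMap (LinearEquiv.ker _)
  have hspan : Submodule.span ℂ {u 0, u 1} = ⊤ := by
    have hrange : Set.range u = {u 0, u 1} := by ext; simp [Fin.exists_fin_two, eq_comm]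
    rw [← hrange]
    exact hu.span_eq_top_of_card_eq_finrank' (by simp)
  rw [← l2_opNorm_toEuclideanCLM] at hT ⊢
  exact ContinuousLinearMap.norm_le_one_of_conj_eigenvalues hT hspan
    (congrArg (WithLp.toLp 2) h₀) (congrArg (WithLp.toLp 2) h₁)
    (congrArg (WithLp.toLp 2) hS₀) (congrArg (WithLp.toLp 2) hS₁)

/-- **Remark 3.2(1)**: the conjugation function lies in `S_{2,gen}(𝔻)`. -/
theorem conj_mem_S2gen_disk (T S : Matrix (Fin 2) (Fin 2) ℂ) (v : Fin 2 → Fin 2 → ℂ)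
    (z w : ℂ) (hT : ‖T‖ ≤ 1) (hv : LinearIndependent ℂ v) (hzw : z ≠ w)
    (hz : ‖z‖ < 1) (hw : ‖w‖ < 1)
    (h₀ : T *ᵥ v 0 = z • v 0) (h₁ : T *ᵥ v 1 = w • v 1)
    (hS₀ : S *ᵥ v 0 = (starRingEnd ℂ) z • v 0)
    (hS₁ : S *ᵥ v 1 = (starRingEnd ℂ) w • v 1) :
    ‖S‖ ≤ 1 :=
  conj_mem_S2gen_disk_general T S v z w hT hv h₀ h₁ hS₀ hS₁
end
end
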